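/- arXiv:1010.2571 — 2 statements merged into one kernel-verified Lean document; each statement's English description precedes it below -/
import Mathlib

section
/- Let H be a K×L complex matrix (K < L) with SVD H = VΣU†, and partition the right singular vectors as U = [C F] where F consists of the columns indexed by a set B ⊆ {1,…,L} with B disjoint from A = {1,…,N_e} (the indices of the N_e retained left singular directions, with singular values in descending order). Let G = [V]_A, and let Ĝ_o be an N_e×M matrix with unit-norm columns, F̂ an L×N_p matrix with orthonormal columns, and F̂_o an N_p×M matrix with orthonormal columns. Then the residual interference power I = ν P ‖Ĝ_o† G† H F̂ F̂_o‖_F² satisfies I ≤ ν M N_p P · ε · max_{ℓ∈A} λ_ℓ, where λ_1 ≥ … ≥ λ_K are the squared singular values of H and ε = ‖C† F̂‖_F² / N_p. -/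
/-! Because `G = [V]_A` with `V` unitary, `Gᴴ H = [Σ]_A Uᴴ`, so `Gᴴ H F̂` is `diag (√λ_a)_{a ∈ A}`
times the rows of `Cᴴ F̂` indexed by `A` (which avoids `B`). Its squared Frobenius norm is thus at
most `max_A λ · ‖Cᴴ F̂‖_F² = max_A λ · Np ε`. Right multiplication by `F̂ₒ` (orthonormal columns)
cannot increase the Frobenius norm, and by Cauchy–Schwarz left multiplication by `Ĝₒᴴ` (unit-norm
columns) increases its square by at most the factor `M`. -/

open Matrix

noncomputable def frobSq {m n : Type*} [Fintype m] [Fintype n] (A : Matrix m n ℂ) : ℝ :=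
  ∑ i, ∑ j, ‖A i j‖ ^ 2

section FrobeniusSq

variable {l m n p : Type*} [Fintype l] [Fintype m] [Fintype n] [Fintype p]

lemma frobSq_nonneg (A : Matrix m n ℂ) : 0 ≤ frobSq A := by
  unfold frobSq; positivity

lemma frobSq_eq_re_trace_mul_conjTranspose (A : Matrix m n ℂ) :
    frobSq A = (A * Aᴴ).trace.re := by
  simp only [frobSq, trace, diag, mul_apply, conjTranspose_apply, Complex.re_sum,
    Complex.star_def, Complex.mul_conj, Complex.normSq_eq_norm_sq, Complex.ofReal_re]

lemma frobSq_eq_frobSq_mul_add_frobSq_mul_one_sub [DecidableEq n] [DecidableEq p]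
    {Q : Matrix n p ℂ} (hQ : Qᴴ * Q = 1) (A : Matrix m n ℂ) :
    frobSq A = frobSq (A * Q) + frobSq (A * (1 - Q * Qᴴ : Matrix n n ℂ)) := by
  set R : Matrix n n ℂ := 1 - Q * Qᴴ with hR
  have hRR : R * Rᴴ = R := by
    simp only [hR, conjTranspose_sub, conjTranspose_one, conjTranspose_mul,
      conjTranspose_conjTranspose, Matrix.sub_mul, Matrix.mul_sub, Matrix.one_mul,
      Matrix.mul_one, Matrix.mul_assoc, ← Matrix.mul_assoc Qᴴ, hQ]
    abel
  have hsplit : A * Aᴴ = A * Q * (A * Q)ᴴ + A * R * (A * R)ᴴ :=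
    calc A * Aᴴ = A * (Q * Qᴴ + R) * Aᴴ := by rw [hR, add_sub_cancel, Matrix.mul_one]
      _ = A * Q * (A * Q)ᴴ + A * (R * Rᴴ) * Aᴴ := by
        simp only [hRR, conjTranspose_mul, Matrix.mul_add, Matrix.add_mul, Matrix.mul_assoc]
      _ = A * Q * (A * Q)ᴴ + A * R * (A * R)ᴴ := by
        simp only [conjTranspose_mul, Matrix.mul_assoc]
  simp only [frobSq_eq_re_trace_mul_conjTranspose, hsplit, trace_add, Complex.add_re]

lemma frobSq_mul_le_of_conjTranspose_mul_self_eq_one [DecidableEq n] [DecidableEq p]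
    {Q : Matrix n p ℂ} (hQ : Qᴴ * Q = 1) (A : Matrix m n ℂ) : frobSq (A * Q) ≤ frobSq A := by
  rw [frobSq_eq_frobSq_mul_add_frobSq_mul_one_sub hQ A]
  exact le_add_of_nonneg_right (frobSq_nonneg _)

lemma frobSq_conjTranspose_mul_le {G : Matrix n m ℂ} (hG : ∀ k, ∑ i, ‖G i k‖ ^ 2 = 1)
    (W : Matrix n p ℂ) : frobSq (Gᴴ * W) ≤ Fintype.card m * frobSq W := by
  have hentry (k : m) (j : p) : ‖(Gᴴ * W) k j‖ ^ 2 ≤ ∑ i, ‖W i j‖ ^ 2 :=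
    calc ‖(Gᴴ * W) k j‖ ^ 2 ≤ (∑ i, ‖G i k‖ * ‖W i j‖) ^ 2 := by
          gcongr
          rw [mul_apply]
          exact (norm_sum_le _ _).trans_eq
            (by simp only [conjTranspose_apply, norm_mul, norm_star])
      _ ≤ (∑ i, ‖G i k‖ ^ 2) * ∑ i, ‖W i j‖ ^ 2 := Finset.sum_mul_sq_le_sq_mul_sq _ _ _
      _ = ∑ i, ‖W i j‖ ^ 2 := by rw [hG k, one_mul]
  calc frobSq (Gᴴ * W) ≤ ∑ _k : m, ∑ j, ∑ i, ‖W i j‖ ^ 2 :=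
        Finset.sum_le_sum fun k _ => Finset.sum_le_sum fun j _ => hentry k j
    _ = Fintype.card m * frobSq W := by
        rw [Finset.sum_const, Finset.card_univ, nsmul_eq_mul, frobSq, Finset.sum_comm]

lemma frobSq_submatrix_le {e : l → m} (he : Function.Injective e) (A : Matrix m n ℂ) :
    frobSq (A.submatrix e id) ≤ frobSq A := by
  simp only [frobSq, submatrix_apply, id]
  exact (Finset.sum_map _ ⟨e, he⟩ fun i => ∑ j, ‖A i j‖ ^ 2).symm.trans_le
    (Finset.sum_le_univ_sum_of_nonneg fun _ => Finset.sum_nonneg fun _ _ => sq_nonneg _)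

lemma frobSq_diagonal_mul_le [DecidableEq m] {d : m → ℂ} {c : ℝ} (hd : ∀ i, ‖d i‖ ^ 2 ≤ c)
    (A : Matrix m n ℂ) : frobSq (diagonal d * A) ≤ c * frobSq A := by
  simp only [frobSq, diagonal_mul, norm_mul, mul_pow, ← Finset.mul_sum]
  rw [Finset.mul_sum]
  exact Finset.sum_le_sum fun i _ =>
    mul_le_mul_of_nonneg_right (hd i) (Finset.sum_nonneg fun _ _ => sq_nonneg _)

end FrobeniusSq

lemma submatrix_id_mul {α l m n p : Type*} [Fintype n] [NonUnitalNonAssocSemiring α]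
    (A : Matrix m n α) (X : Matrix n p α) (e : l → m) :
    A.submatrix e id * X = (A * X).submatrix e id := by
  rw [submatrix_mul _ _ _ _ _ Function.bijective_id, submatrix_id_id]

lemma conjTranspose_submatrix_mul_mul {k l n : Type*} [Fintype k] [DecidableEq k]
    {V : Matrix k k ℂ} (hV : Vᴴ * V = 1) (e : l → k) (X : Matrix k n ℂ) :
    (V.submatrix id e)ᴴ * (V * X) = X.submatrix e id := by
  rw [conjTranspose_submatrix, submatrix_id_mul, ← Matrix.mul_assoc, hV, Matrix.one_mul]

lemma submatrix_castLE_eq_diagonal_mul {K L N : ℕ} (hK : N ≤ K) (hL : N ≤ L)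
    {S : Matrix (Fin K) (Fin L) ℂ} {s : ℕ → ℂ}
    (hS : ∀ i j, S i j = if (i : ℕ) = (j : ℕ) then s i else 0) :
    S.submatrix (Fin.castLE hK) id =
      diagonal (fun a : Fin N => s a) *
        (1 : Matrix (Fin L) (Fin L) ℂ).submatrix (Fin.castLE hL) id := by
  ext a j
  simp [hS, one_apply, Fin.ext_iff]

lemma frobSq_conjTranspose_mul_mul_le_of_svd {K L Ne : ℕ} {q : Type*} [Fintype q]
    (hNe : Ne ≤ K) (hNeL : Ne ≤ L) {H : Matrix (Fin K) (Fin L) ℂ} {V : Matrix (Fin K) (Fin K) ℂ}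
    {U : Matrix (Fin L) (Fin L) ℂ} (hV : Vᴴ * V = 1) {lam : ℕ → ℝ} (hlam : ∀ ℓ, 0 ≤ lam ℓ)
    {S : Matrix (Fin K) (Fin L) ℂ}
    (hS : ∀ i j, S i j = if (i : ℕ) = (j : ℕ) then (Real.sqrt (lam (i : ℕ)) : ℂ) else 0)
    (hH : H = V * S * Uᴴ) {B : Finset (Fin L)} (hAB : ∀ j ∈ B, ¬ ((j : ℕ) < Ne))
    {G : Matrix (Fin K) (Fin Ne) ℂ} (hG : ∀ i (a : Fin Ne), G i a = V i (Fin.castLE hNe a))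
    {C : Matrix (Fin L) {j // j ∉ B} ℂ} (hC : ∀ i j, C i j = U i j.val)
    (F : Matrix (Fin L) q ℂ) :
    frobSq (Gᴴ * H * F) ≤ (⨆ a : Fin Ne, lam a) * frobSq (Cᴴ * F) := by
  -- `A = {0, …, Ne-1}` embedded into the columns of `U` outside `B`
  let ι : Fin Ne → {j // j ∉ B} := fun a => ⟨Fin.castLE hNeL a, fun h => hAB _ h a.isLt⟩
  have hι : Function.Injective ι := fun a b h =>
    Fin.castLE_injective hNeL (congrArg Subtype.val h)
  let d : Fin Ne → ℂ := fun a => √(lam a)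
  have hGHF : Gᴴ * H * F = diagonal d * (Cᴴ * F).submatrix ι id :=
    calc Gᴴ * H * F = Gᴴ * (V * (S * (Uᴴ * F))) := by rw [hH]; simp only [Matrix.mul_assoc]
      _ = S.submatrix (Fin.castLE hNe) id * (Uᴴ * F) := by
        rw [show G = V.submatrix id (Fin.castLE hNe) from Matrix.ext hG,
          conjTranspose_submatrix_mul_mul hV, submatrix_id_mul]
      _ = diagonal d * (Uᴴ * F).submatrix (Fin.castLE hNeL) id := by
        rw [submatrix_castLE_eq_diagonal_mul hNe hNeL (s := fun i => (√(lam i) : ℂ)) hS,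
          Matrix.mul_assoc, submatrix_id_mul, Matrix.one_mul]
      _ = diagonal d * (Cᴴ * F).submatrix ι id := by
        rw [show C = U.submatrix id Subtype.val from Matrix.ext hC, conjTranspose_submatrix,
          submatrix_id_mul, submatrix_submatrix]
        rfl
  have hd (a : Fin Ne) : ‖d a‖ ^ 2 ≤ ⨆ a : Fin Ne, lam a := by
    rw [Complex.norm_real, Real.norm_of_nonneg (Real.sqrt_nonneg _), Real.sq_sqrt (hlam _)]
    exact le_ciSup (f := fun a : Fin Ne => lam a) (Set.finite_range _).bddAbove a
  rw [hGHF]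
  exact (frobSq_diagonal_mul_le hd _).trans
    (mul_le_mul_of_nonneg_left (frobSq_submatrix_le hι _) (Real.iSup_nonneg fun a => hlam a))

theorem stmt6_general {K L Ne Np M : ℕ} (hKL : K < L) (hNe : Ne ≤ K) (hNp : 0 < Np)
    (H : Matrix (Fin K) (Fin L) ℂ)
    (V : Matrix (Fin K) (Fin K) ℂ) (U : Matrix (Fin L) (Fin L) ℂ)
    (hV : V ∈ Matrix.unitaryGroup (Fin K) ℂ)
    (lam : ℕ → ℝ) (hlampos : ∀ ℓ, 0 ≤ lam ℓ)
    (S : Matrix (Fin K) (Fin L) ℂ)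
    (hS : ∀ i j, S i j = if (i : ℕ) = (j : ℕ) then (Real.sqrt (lam (i : ℕ)) : ℂ) else 0)
    (hH : H = V * S * Uᴴ)
    (B : Finset (Fin L))
    (hAB : ∀ j ∈ B, ¬ ((j : ℕ) < Ne))
    (G : Matrix (Fin K) (Fin Ne) ℂ) (hG : ∀ i (a : Fin Ne), G i a = V i (Fin.castLE hNe a))
    (C : Matrix (Fin L) {j // j ∉ B} ℂ) (hC : ∀ i j, C i j = U i j.val)
    (Fhat : Matrix (Fin L) (Fin Np) ℂ)
    (Go : Matrix (Fin Ne) (Fin M) ℂ) (hGo : ∀ k, ∑ i, ‖Go i k‖ ^ 2 = 1)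
    (Fo : Matrix (Fin Np) (Fin M) ℂ) (hFo : Foᴴ * Fo = 1)
    (ν P ε : ℝ) (hν : 0 < ν) (hP : 0 < P)
    (hε : ε = frobSq (Cᴴ * Fhat) / Np) :
    ν * P * frobSq (Goᴴ * Gᴴ * H * Fhat * Fo) ≤
      ν * M * Np * P * ε * (⨆ a : Fin Ne, lam (a : ℕ)) := by
  have hX : frobSq (Gᴴ * H * Fhat) ≤ (⨆ a : Fin Ne, lam a) * frobSq (Cᴴ * Fhat) :=
    frobSq_conjTranspose_mul_mul_le_of_svd hNe (hNe.trans hKL.le) hV.1 hlampos hS hH hAB hG hC Fhat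
  have hY : frobSq (Goᴴ * Gᴴ * H * Fhat * Fo) ≤ M * frobSq (Gᴴ * H * Fhat) := by
    simpa only [Matrix.mul_assoc, Fintype.card_fin] using
      (frobSq_conjTranspose_mul_le hGo _).trans (mul_le_mul_of_nonneg_left
        (frobSq_mul_le_of_conjTranspose_mul_self_eq_one hFo (Gᴴ * H * Fhat)) (Nat.cast_nonneg _))
  have hCF : frobSq (Cᴴ * Fhat) = Np * ε := by
    rw [hε, mul_div_cancel₀ _ (Nat.cast_ne_zero.mpr hNp.ne')]
  calc ν * P * frobSq (Goᴴ * Gᴴ * H * Fhat * Fo)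
      ≤ ν * P * (M * ((⨆ a : Fin Ne, lam a) * frobSq (Cᴴ * Fhat))) := by
        gcongr
        exact hY.trans (mul_le_mul_of_nonneg_left hX (Nat.cast_nonneg M))
    _ = ν * M * Np * P * ε * (⨆ a : Fin Ne, lam (a : ℕ)) := by rw [hCF]; ring

/-- Residual interference bound with quantized cooperative feedback.
`H = V Σ Uᴴ` (K < L) with squared singular values `λ₁ ≥ … ≥ λ_K ≥ 0`; `A = {0,…,Ne-1}`,
`B ⊆ Fin L` disjoint from `A` with `|B| = Np`; `G = [V]_A` is the inner equalizer, the
ideal inner precoder is `F = [U]_B`, `C` collects the remaining columns of `U`;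
`F̂` is the quantized inner precoder (orthonormal columns), `Ĝₒ` has unit-norm columns,
`F̂ₒ` has orthonormal columns. Then
`I = ν P ‖Ĝₒᴴ Gᴴ H F̂ F̂ₒ‖_F² ≤ ν M Np P ε max_{ℓ∈A} λ_ℓ` with `ε = ‖Cᴴ F̂‖_F² / Np`. -/
theorem stmt6 {K L Ne Np M : ℕ} (hKL : K < L) (hNe : Ne ≤ K) (hNp : 0 < Np)
    (H : Matrix (Fin K) (Fin L) ℂ)
    (V : Matrix (Fin K) (Fin K) ℂ) (U : Matrix (Fin L) (Fin L) ℂ)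
    (hV : V ∈ Matrix.unitaryGroup (Fin K) ℂ) (hU : U ∈ Matrix.unitaryGroup (Fin L) ℂ)
    (lam : ℕ → ℝ) (hlampos : ∀ ℓ, 0 ≤ lam ℓ)
    (hdesc : ∀ i j : ℕ, i ≤ j → lam j ≤ lam i)
    (S : Matrix (Fin K) (Fin L) ℂ)
    (hS : ∀ i j, S i j = if (i : ℕ) = (j : ℕ) then (Real.sqrt (lam (i : ℕ)) : ℂ) else 0)
    (hH : H = V * S * Uᴴ)
    (B : Finset (Fin L)) (hBcard : B.card = Np)
    (hAB : ∀ j ∈ B, ¬ ((j : ℕ) < Ne))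
    (G : Matrix (Fin K) (Fin Ne) ℂ) (hG : ∀ i (a : Fin Ne), G i a = V i (Fin.castLE hNe a))
    (C : Matrix (Fin L) {j // j ∉ B} ℂ) (hC : ∀ i j, C i j = U i j.val)
    (Fhat : Matrix (Fin L) (Fin Np) ℂ) (hFhat : Fhatᴴ * Fhat = 1)
    (Go : Matrix (Fin Ne) (Fin M) ℂ) (hGo : ∀ k, ∑ i, ‖Go i k‖ ^ 2 = 1)
    (Fo : Matrix (Fin Np) (Fin M) ℂ) (hFo : Foᴴ * Fo = 1)
    (ν P ε : ℝ) (hν : 0 < ν) (hP : 0 < P)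
    (hε : ε = frobSq (Cᴴ * Fhat) / Np) :
    ν * P * frobSq (Goᴴ * Gᴴ * H * Fhat * Fo) ≤
      ν * M * Np * P * ε * (⨆ a : Fin Ne, lam (a : ℕ)) :=
  stmt6_general hKL hNe hNp H V U hV lam hlampos S hS hH B hAB G hG C hC Fhat Go hGo Fo hFo ν P ε hν
    hP hε
end

section
/- Let f : (0,∞) → [0,1] be a cumulative distribution function with f(x) = a x^d + o(x^d) as x → 0⁺ for constants a > 0 and d ≥ 2, with density f'. Then ∫₀^{c/P} log₂(1/x) f'(x) dx = o(P^{−d+1}) as P → ∞, for any fixed c > 0. -/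
/-!
Integration by parts against `G(x) = log_b(1/x) f(x)` gives, for `0 < t ≤ ε ≤ 1`,
`∫_t^ε log_b(1/x) f'(x) dx = G(ε) - G(t) + ∫_t^ε f(x) / (x log b) dx`. If `0 ≤ f(x) ≤ C x^d`
on `(0, ε]`, then `G(t) ≥ 0` and the right-hand side is at most `C ε^d (log_b(1/ε) + 1/log b)`,
uniformly in `t`, so the same bound holds on `(0, ε]`. As `ε log ε → 0`, this bound is
`o(ε^{d-1})` when `ε → 0⁺`, and the substitution `ε = c/P` turns it into `o(P^{1-d})`.
-/

open Filter Asymptotics MeasureTheory Set Real Topology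

theorem Filter.Eventually.forall_Ioc_nhdsGT {α : Type*} [LinearOrder α] [TopologicalSpace α]
    [OrderTopology α] [NoMaxOrder α] [DenselyOrdered α] {p : α → Prop} {a : α}
    (h : ∀ᶠ x in 𝓝[>] a, p x) : ∀ᶠ ε in 𝓝[>] a, ∀ x ∈ Ioc a ε, p x := by
  obtain ⟨u, hau, hu⟩ := mem_nhdsGT_iff_exists_Ioc_subset.1 h
  filter_upwards [Ioo_mem_nhdsGT hau] with ε hε x hx
  exact hu ⟨hx.1, hx.2.trans hε.2.le⟩

theorem intervalIntegral_le_of_forall_Ioo_le {g : ℝ → ℝ} {a c B : ℝ} (hac : a < c)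
    (hg : IntegrableOn g (Ioc a c)) (h : ∀ t ∈ Ioo a c, ∫ x in t..c, g x ≤ B) :
    ∫ x in a..c, g x ≤ B := by
  have hcont : ContinuousOn (fun t => ∫ x in t..c, g x) (Icc a c) := by
    have hg' : IntegrableOn g (uIcc a c) := by
      rwa [uIcc_of_le hac.le, integrableOn_Icc_iff_integrableOn_Ioc]
    simpa [uIcc_of_le hac.le] using intervalIntegral.continuousOn_primitive_interval_left hg'
  refine ContinuousWithinAt.closure_le (by simp [closure_Ioo hac.ne, hac.le])
    ((hcont a (left_mem_Icc.2 hac.le)).mono Ioo_subset_Icc_self) continuousWithinAt_const h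

theorem hasDerivAt_logb_one_div (b : ℝ) {x : ℝ} (hx : x ≠ 0) :
    HasDerivAt (fun y => logb b (1 / y)) (-(x * log b)⁻¹) x := by
  have h : (fun y => logb b (1 / y)) = fun y => -log y / log b := by
    funext y; rw [logb, one_div, log_inv]
  rw [h, mul_inv, ← div_eq_mul_inv, ← neg_div]
  exact (hasDerivAt_log hx).neg.div_const (log b)

theorem isLittleO_pow_mul_logb_one_div_add {d : ℕ} (hd : 1 ≤ d) (b K : ℝ) :
    (fun ε => ε ^ d * (logb b (1 / ε) + K)) =o[𝓝[>] 0] fun ε => ε ^ (d - 1) := by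
  obtain ⟨n, rfl⟩ : ∃ n, d = n + 1 := ⟨d - 1, by omega⟩
  set h : ℝ → ℝ := fun ε => -(ε * log ε) / log b + K * ε
  have hh : Tendsto h (𝓝[>] 0) (𝓝 0) := by
    have : Continuous h := by fun_prop
    simpa [h] using (this.tendsto 0).mono_left nhdsWithin_le_nhds
  refine ((isBigO_refl (fun ε : ℝ => ε ^ n) _).mul_isLittleO
    (isLittleO_one_iff (F := ℝ) |>.2 hh)).congr (fun ε => ?_) (fun ε => by simp)
  simp only [h, logb, one_div, log_inv]
  ring

section LogMoment

variable {f f' : ℝ → ℝ} {b : ℝ}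

theorem integral_logb_one_div_mul_deriv {t ε : ℝ} (ht : 0 < t) (htε : t ≤ ε)
    (hderiv : ∀ x ∈ Icc t ε, HasDerivAt f (f' x) x)
    (hint : IntervalIntegrable (fun x => logb b (1 / x) * f' x) volume t ε) :
    ∫ x in t..ε, logb b (1 / x) * f' x =
      logb b (1 / ε) * f ε - logb b (1 / t) * f t + ∫ x in t..ε, f x / x / log b := by
  have hpos : ∀ x ∈ Icc t ε, x ≠ 0 := fun x hx => (ht.trans_le hx.1).ne'
  have hG : ∀ x ∈ uIcc t ε, HasDerivAt (fun y => logb b (1 / y) * f y)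
      (logb b (1 / x) * f' x - f x / x / log b) x := by
    intro x hx
    rw [uIcc_of_le htε] at hx
    refine ((hasDerivAt_logb_one_div b (hpos x hx)).mul (hderiv x hx)).congr_deriv ?_
    ring
  have hrest : IntervalIntegrable (fun x => f x / x / log b) volume t ε := by
    refine (ContinuousOn.intervalIntegrable ?_).div_const _
    rw [uIcc_of_le htε]
    exact ContinuousOn.div (fun x hx => (hderiv x hx).continuousAt.continuousWithinAt)
      continuousOn_id hpos
  have hFTC := intervalIntegral.integral_eq_sub_of_hasDerivAt hG (hint.sub hrest)
  rw [intervalIntegral.integral_sub hint hrest] at hFTC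
  linarith

theorem integral_Ioc_logb_one_div_mul_deriv_le (hb : 1 < b) {C ε : ℝ} {d : ℕ} (hd : 1 ≤ d)
    (hε : 0 < ε) (hε1 : ε ≤ 1) (hderiv : ∀ x ∈ Ioc 0 ε, HasDerivAt f (f' x) x)
    (hf0 : ∀ x ∈ Ioc 0 ε, 0 ≤ f x) (hfC : ∀ x ∈ Ioc 0 ε, f x ≤ C * x ^ d) :
    ∫ x in Ioc 0 ε, logb b (1 / x) * f' x ≤ C * ε ^ d * (logb b (1 / ε) + 1 / log b) := by
  obtain ⟨n, rfl⟩ : ∃ n, d = n + 1 := ⟨d - 1, by omega⟩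
  have hlogb : 0 < log b := log_pos hb
  have hlogb_one_div : ∀ x ∈ Ioc 0 1, 0 ≤ logb b (1 / x) := fun x hx =>
    logb_nonneg hb (one_le_one_div hx.1 hx.2)
  have hεmem : ε ∈ Ioc 0 ε := ⟨hε, le_rfl⟩
  have hC : 0 ≤ C := by
    have := (hf0 ε hεmem).trans (hfC ε hεmem)
    exact nonneg_of_mul_nonneg_left this (by positivity)
  by_cases hint : IntegrableOn (fun x => logb b (1 / x) * f' x) (Ioc 0 ε)
  swap
  · -- a non-integrable integrand has integral `0`, which lies below the nonnegative bound
    rw [integral_undef hint]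
    have := hlogb_one_div ε ⟨hε, hε1⟩
    positivity
  rw [← intervalIntegral.integral_of_le hε.le]
  refine intervalIntegral_le_of_forall_Ioo_le hε hint fun t ht => ?_
  have hderiv' : ∀ x ∈ Icc t ε, HasDerivAt f (f' x) x :=
    fun x hx => hderiv x ⟨ht.1.trans_le hx.1, hx.2⟩
  have hint' : IntervalIntegrable (fun x => logb b (1 / x) * f' x) volume t ε :=
    (intervalIntegrable_iff_integrableOn_Ioc_of_le ht.2.le).2
      (hint.mono_set (Ioc_subset_Ioc_left ht.1.le))
  rw [integral_logb_one_div_mul_deriv ht.1 ht.2.le hderiv' hint']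
  have hε_term : logb b (1 / ε) * f ε ≤ C * ε ^ (n + 1) * logb b (1 / ε) := by
    rw [mul_comm]
    exact mul_le_mul_of_nonneg_right (hfC ε hεmem) (hlogb_one_div ε ⟨hε, hε1⟩)
  have ht_term : 0 ≤ logb b (1 / t) * f t :=
    mul_nonneg (hlogb_one_div t ⟨ht.1, ht.2.le.trans hε1⟩) (hf0 t ⟨ht.1, ht.2.le⟩)
  have hpointwise : ∀ x ∈ uIoc t ε, ‖f x / x / log b‖ ≤ C * ε ^ n / log b := by
    intro x hx
    rw [uIoc_of_le ht.2.le] at hx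
    have hx0 : 0 < x := ht.1.trans hx.1
    have hfx := hf0 x ⟨hx0, hx.2⟩
    rw [norm_of_nonneg (by positivity)]
    gcongr
    rw [div_le_iff₀ hx0]
    calc f x ≤ C * x ^ (n + 1) := hfC x ⟨hx0, hx.2⟩
      _ = C * x ^ n * x := by ring
      _ ≤ C * ε ^ n * x := by gcongr; exact hx.2
  have hrest : ∫ x in t..ε, f x / x / log b ≤ C * ε ^ (n + 1) / log b :=
    calc ∫ x in t..ε, f x / x / log b ≤ C * ε ^ n / log b * |ε - t| :=
          (le_norm_self _).trans (intervalIntegral.norm_integral_le_of_norm_le_const hpointwise)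
      _ ≤ C * ε ^ n / log b * ε := by
          gcongr
          rw [abs_of_nonneg (by linarith [ht.2])]
          linarith [ht.1]
      _ = C * ε ^ (n + 1) / log b := by ring
  rw [mul_add, mul_one_div]
  linarith

end LogMoment

theorem isLittleO_integral_Ioc_logb_one_div_mul_deriv {f f' : ℝ → ℝ} {b : ℝ} (hb : 1 < b)
    {d : ℕ} (hd : 1 ≤ d) (hderiv : ∀ x ∈ Ioi 0, HasDerivAt f (f' x) x)
    (hf0 : ∀ x ∈ Ioi 0, 0 ≤ f x) (hf'0 : ∀ x ∈ Ioi 0, 0 ≤ f' x)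
    (hfO : f =O[𝓝[>] 0] fun x => x ^ d) :
    (fun ε => ∫ x in Ioc 0 ε, logb b (1 / x) * f' x) =o[𝓝[>] 0] fun ε => ε ^ (d - 1) := by
  obtain ⟨C, hC⟩ := hfO.bound
  have hfC : ∀ᶠ ε in 𝓝[>] 0, ∀ x ∈ Ioc 0 ε, f x ≤ C * x ^ d := by
    refine Eventually.forall_Ioc_nhdsGT ?_
    filter_upwards [hC, self_mem_nhdsWithin] with x hx hx0
    simpa [abs_of_pos (mem_Ioi.1 hx0)] using (le_abs_self _).trans hx
  refine IsBigO.trans_isLittleO (IsBigO.of_bound |C| ?_)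
    (isLittleO_pow_mul_logb_one_div_add hd b (1 / log b))
  filter_upwards [hfC, Ioc_mem_nhdsGT one_pos] with ε hfCε hε
  have hlogb_nonneg : ∀ x ∈ Ioc (0 : ℝ) ε, 0 ≤ logb b (1 / x) := fun x hx =>
    logb_nonneg hb (one_le_one_div hx.1 (hx.2.trans hε.2))
  have hI : 0 ≤ ∫ x in Ioc 0 ε, logb b (1 / x) * f' x :=
    setIntegral_nonneg measurableSet_Ioc fun x hx => mul_nonneg (hlogb_nonneg x hx) (hf'0 x hx.1)
  rw [norm_of_nonneg hI, norm_eq_abs, ← abs_mul, ← mul_assoc]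
  exact (integral_Ioc_logb_one_div_mul_deriv_le hb hd hε.1 hε.2 (fun x hx => hderiv x hx.1)
    (fun x hx => hf0 x hx.1) hfCε).trans (le_abs_self _)

theorem stmt15_general (f f' : ℝ → ℝ) (a : ℝ) (d : ℕ) (c : ℝ)
    (hd : 2 ≤ d) (hc : 0 < c)
    (hmono : MonotoneOn f (Set.Ioi 0))
    (hrange : ∀ x ∈ Set.Ioi (0 : ℝ), f x ∈ Set.Icc (0 : ℝ) 1)
    (hderiv : ∀ x ∈ Set.Ioi (0 : ℝ), HasDerivAt f (f' x) x)
    (hexp : (fun x => f x - a * x ^ d) =o[nhdsWithin 0 (Set.Ioi 0)] fun x => x ^ d) :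
    (fun P => ∫ x in Set.Ioc (0 : ℝ) (c / P), Real.logb 2 (1 / x) * f' x) =o[atTop]
      fun P : ℝ => P ^ ((1 : ℝ) - d) := by
  have hfO : f =O[𝓝[>] 0] fun x => x ^ d := by
    simpa using hexp.isBigO.add (isBigO_const_mul_self a (fun x : ℝ => x ^ d) _)
  have hf'0 : ∀ x ∈ Ioi 0, 0 ≤ f' x := fun x hx =>
    (hderiv x hx).hasDerivWithinAt.nonneg_of_monotoneOn (isOpen_Ioi.preperfect x hx) hmono
  have hcP : Tendsto (fun P : ℝ => c / P) atTop (𝓝[>] 0) :=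
    tendsto_nhdsWithin_iff.2 ⟨tendsto_const_nhds.div_atTop tendsto_id,
      eventually_gt_atTop 0 |>.mono fun P hP => div_pos hc hP⟩
  have hpow : (fun P : ℝ => (c / P) ^ (d - 1)) =O[atTop] fun P : ℝ => P ^ ((1 : ℝ) - d) := by
    refine (isBigO_const_mul_self (c ^ (d - 1)) _ atTop).congr' ?_ EventuallyEq.rfl
    filter_upwards [eventually_gt_atTop 0] with P hP
    rw [div_pow, div_eq_mul_inv, ← rpow_natCast P, ← rpow_neg hP.le, Nat.cast_sub (by omega)]
    ring_nf
  exact ((isLittleO_integral_Ioc_logb_one_div_mul_deriv one_lt_two (by omega) hderiv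
    (fun x hx => (hrange x hx).1) hf'0 hfO).comp_tendsto hcP).trans_isBigO hpow

/-- Let `f : (0,∞) → [0,1]` be a CDF with `f(x) = a x^d + o(x^d)` as `x → 0⁺`
(`a > 0`, `d ≥ 2`) and density `f'`. Then for any fixed `c > 0`,
`∫₀^{c/P} log₂(1/x) f'(x) dx = o(P^{-d+1})` as `P → ∞`. -/
theorem stmt15 (f f' : ℝ → ℝ) (a : ℝ) (d : ℕ) (c : ℝ)
    (ha : 0 < a) (hd : 2 ≤ d) (hc : 0 < c)
    (hmono : MonotoneOn f (Set.Ioi 0))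
    (hrange : ∀ x ∈ Set.Ioi (0 : ℝ), f x ∈ Set.Icc (0 : ℝ) 1)
    (hderiv : ∀ x ∈ Set.Ioi (0 : ℝ), HasDerivAt f (f' x) x)
    (hexp : (fun x => f x - a * x ^ d) =o[nhdsWithin 0 (Set.Ioi 0)] fun x => x ^ d) :
    (fun P => ∫ x in Set.Ioc (0 : ℝ) (c / P), Real.logb 2 (1 / x) * f' x) =o[atTop]
      fun P : ℝ => P ^ ((1 : ℝ) - d) :=
  stmt15_general f f' a d c hd hc hmono hrange hderiv hexp
end
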